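/- Let A be Azumaya over commutative Noetherian R. The map I ↦ f_0·I·f_0 from two-sided ideals of D_k(A) to two-sided ideals of D_k(R) is a bijection, with inverse J ↦ D_k(A)·J̄·D_k(A) where J̄ = {φ̄ : φ ∈ J}. -/

import Mathlib

open MulOpposite

instance (priority := 900) smulCommSelf' {k A : Type*} [CommSemiring k] [Semiring A]
    [Algebra k A] : SMulCommClass A k A := SMulCommClass.symm k A A

variable (k : Type*) [Field k]
variable (A : Type*) [Ring A] [Algebra k A]
variable (L : Type*) [AddCommGroup L] [Module k L] [Module A L] [SMulCommClass A k L]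

/-- Left action of `A` on `L` as a `k`-linear endomorphism. -/
def lop (a : A) : L →ₗ[k] L where
  toFun x := a • x
  map_add' := smul_add a
  map_smul' c x := smul_comm a c x

/-- The `A`-sub-bimodule (as an additive subgroup closed under both actions)
generated by a set of operators. -/
def genBi (T : Set (L →ₗ[k] L)) : AddSubgroup (L →ₗ[k] L) :=
  AddSubgroup.closure {ψ | ∃ a b : A, ∃ t ∈ T, ψ = (lop k A L a).comp (t.comp (lop k A L b))}

/-- The Lunts–Rosenberg filtration of differential operators on the left `A`-module `L`:
`Dfil 0` is the sub-bimodule generated by the central elements of `Hom_k(L,L)`, and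
`Dfil (m+1)` is the sub-bimodule generated by operators whose commutators with `A`
lie in `Dfil m`. -/
def Dfil : ℕ → AddSubgroup (L →ₗ[k] L)
  | 0 => genBi k A L {φ | ∀ a : A, (lop k A L a).comp φ = φ.comp (lop k A L a)}
  | (m+1) => genBi k A L {φ | ∀ a : A, (lop k A L a).comp φ - φ.comp (lop k A L a) ∈ Dfil m}

/-- The ring of differential operators: union of the filtration. -/
def Ddiff : Set (L →ₗ[k] L) := ⋃ m, (Dfil k A L m : Set (L →ₗ[k] L))

set_option linter.unusedSectionVars false

section GenAux

variable {k : Type*} [Field k]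
variable {A : Type*} [Ring A] [Algebra k A]
variable {L : Type*} [AddCommGroup L] [Module k L] [Module A L] [SMulCommClass A k L]

lemma lop_one : lop k A L 1 = LinearMap.id := by
  ext x; simp [lop]

lemma lop_mul (a b : A) : (lop k A L a).comp (lop k A L b) = lop k A L (a * b) := by
  ext x; simp [lop, mul_smul]

lemma mem_genBi_of {T : Set (L →ₗ[k] L)} {t : L →ₗ[k] L} (ht : t ∈ T) (a b : A) :
    (lop k A L a).comp (t.comp (lop k A L b)) ∈ genBi k A L T :=
  AddSubgroup.subset_closure ⟨a, b, t, ht, rfl⟩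

lemma mem_genBi_self {T : Set (L →ₗ[k] L)} {t : L →ₗ[k] L} (ht : t ∈ T) :
    t ∈ genBi k A L T := by
  have := mem_genBi_of (k := k) (A := A) (L := L) ht 1 1
  rwa [lop_one, LinearMap.comp_id, LinearMap.id_comp] at this

lemma genBi_lam {T : Set (L →ₗ[k] L)} {ψ : L →ₗ[k] L} (hψ : ψ ∈ genBi k A L T)
    (a b : A) : (lop k A L a).comp (ψ.comp (lop k A L b)) ∈ genBi k A L T := by
  induction hψ using AddSubgroup.closure_induction with
  | mem x hx =>
    obtain ⟨c, d, t, ht, rfl⟩ := hx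
    have : (lop k A L a).comp (((lop k A L c).comp (t.comp (lop k A L d))).comp
        (lop k A L b)) = (lop k A L (a * c)).comp (t.comp (lop k A L (d * b))) := by
      rw [← lop_mul, ← lop_mul]; ext x; rfl
    rw [this]; exact mem_genBi_of ht _ _
  | zero => simpa using (genBi k A L T).zero_mem
  | add x y hx hy px py =>
      have : (lop k A L a).comp ((x + y).comp (lop k A L b)) =
          (lop k A L a).comp (x.comp (lop k A L b)) +
          (lop k A L a).comp (y.comp (lop k A L b)) := by ext z; simp
      rw [this]; exact (genBi k A L T).add_mem px py
  | neg x hx px =>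
      have : (lop k A L a).comp ((-x).comp (lop k A L b)) =
          -((lop k A L a).comp (x.comp (lop k A L b))) := by ext z; simp
      rw [this]; exact (genBi k A L T).neg_mem px

lemma genBi_comm {T : Set (L →ₗ[k] L)} {ψ : L →ₗ[k] L} (hψ : ψ ∈ genBi k A L T)
    (a : A) : (lop k A L a).comp ψ - ψ.comp (lop k A L a) ∈ genBi k A L T := by
  induction hψ using AddSubgroup.closure_induction with
  | mem x hx =>
    obtain ⟨c, d, t, ht, rfl⟩ := hx
    have h1 : (lop k A L a).comp ((lop k A L c).comp (t.comp (lop k A L d))) =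
        (lop k A L (a * c)).comp (t.comp (lop k A L d)) := by
      rw [← lop_mul]; ext x; rfl
    have h2 : ((lop k A L c).comp (t.comp (lop k A L d))).comp (lop k A L a) =
        (lop k A L c).comp (t.comp (lop k A L (d * a))) := by
      rw [← lop_mul]; ext x; rfl
    rw [h1, h2]
    exact (genBi k A L T).sub_mem (mem_genBi_of ht _ _) (mem_genBi_of ht _ _)
  | zero => simpa using (genBi k A L T).zero_mem
  | add x y hx hy px py =>
      have : (lop k A L a).comp (x + y) - (x + y).comp (lop k A L a) =
          ((lop k A L a).comp x - x.comp (lop k A L a)) +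
          ((lop k A L a).comp y - y.comp (lop k A L a)) := by ext z; simp; abel
      rw [this]; exact (genBi k A L T).add_mem px py
  | neg x hx px =>
      have : (lop k A L a).comp (-x) - (-x).comp (lop k A L a) =
          -((lop k A L a).comp x - x.comp (lop k A L a)) := by ext z; simp; abel
      rw [this]; exact (genBi k A L T).neg_mem px

end GenAux
section DfilAux

variable {k : Type*} [Field k]
variable {A : Type*} [Ring A] [Algebra k A]
variable {L : Type*} [AddCommGroup L] [Module k L] [Module A L] [SMulCommClass A k L]

lemma Dfil_zero : Dfil k A L 0 =
    genBi k A L {φ | ∀ a : A, (lop k A L a).comp φ = φ.comp (lop k A L a)} := rfl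

lemma Dfil_succ (m : ℕ) : Dfil k A L (m + 1) =
    genBi k A L {φ | ∀ a : A,
      (lop k A L a).comp φ - φ.comp (lop k A L a) ∈ Dfil k A L m} := rfl

lemma Dfil_comm {m : ℕ} {Φ : L →ₗ[k] L} (hΦ : Φ ∈ Dfil k A L m) (a : A) :
    (lop k A L a).comp Φ - Φ.comp (lop k A L a) ∈ Dfil k A L m := by
  cases m with
  | zero => rw [Dfil_zero] at hΦ ⊢; exact genBi_comm hΦ a
  | succ m => rw [Dfil_succ] at hΦ ⊢; exact genBi_comm hΦ a

lemma Dfil_lam {m : ℕ} {Φ : L →ₗ[k] L} (hΦ : Φ ∈ Dfil k A L m) (a b : A) :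
    (lop k A L a).comp (Φ.comp (lop k A L b)) ∈ Dfil k A L m := by
  cases m with
  | zero => rw [Dfil_zero] at hΦ ⊢; exact genBi_lam hΦ a b
  | succ m => rw [Dfil_succ] at hΦ ⊢; exact genBi_lam hΦ a b

lemma mem_Dfil_zero_of_central {φ : L →ₗ[k] L}
    (hφ : ∀ a : A, (lop k A L a).comp φ = φ.comp (lop k A L a)) :
    φ ∈ Dfil k A L 0 := by
  rw [Dfil_zero]; exact mem_genBi_self hφ

lemma mem_Dfil_succ_of_core {m : ℕ} {φ : L →ₗ[k] L}
    (hφ : ∀ a : A, (lop k A L a).comp φ - φ.comp (lop k A L a) ∈ Dfil k A L m) :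
    φ ∈ Dfil k A L (m + 1) := by
  rw [Dfil_succ]; exact mem_genBi_self hφ

lemma Dfil_mono : Monotone (Dfil k A L) := by
  have step : ∀ m, Dfil k A L m ≤ Dfil k A L (m + 1) := by
    intro m Φ hΦ
    exact mem_Dfil_succ_of_core fun a => Dfil_comm hΦ a
  exact monotone_nat_of_le_succ step

lemma id_mem_Dfil_zero : (LinearMap.id : L →ₗ[k] L) ∈ Dfil k A L 0 :=
  mem_Dfil_zero_of_central fun a => by ext x; rfl

lemma lop_mem_Dfil_zero (a : A) : lop k A L a ∈ Dfil k A L 0 := by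
  have : lop k A L a = (lop k A L a).comp ((LinearMap.id).comp (lop k A L 1)) := by
    rw [lop_one]; rfl
  rw [this, Dfil_zero]
  have hid : (LinearMap.id : L →ₗ[k] L) ∈
      {φ : L →ₗ[k] L | ∀ c : A, (lop k A L c).comp φ = φ.comp (lop k A L c)} :=
    fun c => by ext x; rfl
  exact mem_genBi_of hid a 1

end DfilAux
section CompAux

variable {k : Type*} [Field k]
variable {A : Type*} [Ring A] [Algebra k A]
variable {L : Type*} [AddCommGroup L] [Module k L] [Module A L] [SMulCommClass A k L]

/-- The generating ("core") sets of the filtration. -/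
def coreSet (k : Type*) [Field k] (A : Type*) [Ring A] [Algebra k A]
    (L : Type*) [AddCommGroup L] [Module k L] [Module A L] [SMulCommClass A k L] :
    ℕ → Set (L →ₗ[k] L)
  | 0 => {φ | ∀ a : A, (lop k A L a).comp φ = φ.comp (lop k A L a)}
  | (m+1) => {φ | ∀ a : A, (lop k A L a).comp φ - φ.comp (lop k A L a) ∈ Dfil k A L m}

lemma Dfil_eq_genBi_coreSet (m : ℕ) :
    Dfil k A L m = genBi k A L (coreSet k A L m) := by
  cases m <;> rfl

lemma coreSet_mem_Dfil {m : ℕ} {φ : L →ₗ[k] L} (hφ : φ ∈ coreSet k A L m) :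
    φ ∈ Dfil k A L m := by
  rw [Dfil_eq_genBi_coreSet]; exact mem_genBi_self hφ

lemma coreSet_comm {m : ℕ} {φ : L →ₗ[k] L} (hφ : φ ∈ coreSet k A L m) (a : A) :
    (lop k A L a).comp φ - φ.comp (lop k A L a) ∈ Dfil k A L (m - 1) := by
  cases m with
  | zero => rw [hφ a]; simpa using (Dfil k A L 0).zero_mem
  | succ m => exact hφ a

lemma mem_Dfil_of_coreSet' {m : ℕ} {φ : L →ₗ[k] L} (hφ : φ ∈ coreSet k A L m)
    (a b : A) : (lop k A L a).comp (φ.comp (lop k A L b)) ∈ Dfil k A L m := by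
  rw [Dfil_eq_genBi_coreSet]; exact mem_genBi_of hφ a b

private lemma comp_split (a b c d : A) (φ ψ : L →ₗ[k] L) :
    ((lop k A L a).comp (φ.comp (lop k A L b))).comp
      ((lop k A L c).comp (ψ.comp (lop k A L d))) =
    (lop k A L a).comp ((φ.comp ψ).comp (lop k A L (b * c * d))) +
    (lop k A L a).comp ((φ.comp ((lop k A L (b * c)).comp ψ -
      ψ.comp (lop k A L (b * c)))).comp (lop k A L d)) := by
  ext x
  simp only [LinearMap.comp_apply, LinearMap.add_apply, LinearMap.sub_apply, lop,
    LinearMap.coe_mk, AddHom.coe_mk, map_sub, mul_smul]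
  abel

lemma Dfil_comp_aux : ∀ N m m', m + m' = N → ∀ Φ Ψ : L →ₗ[k] L,
    Φ ∈ Dfil k A L m → Ψ ∈ Dfil k A L m' → Φ.comp Ψ ∈ Dfil k A L (m + m') := by
  intro N
  induction N using Nat.strong_induction_on with
  | _ N IH =>
  have IH' : ∀ m₁ m₁', m₁ + m₁' < N → ∀ Φ' Ψ' : L →ₗ[k] L, Φ' ∈ Dfil k A L m₁ →
      Ψ' ∈ Dfil k A L m₁' → Φ'.comp Ψ' ∈ Dfil k A L (m₁ + m₁') :=
    fun m₁ m₁' h Φ' Ψ' h1 h2 => IH _ h m₁ m₁' rfl Φ' Ψ' h1 h2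
  intro m m' hN Φ Ψ hΦ hΨ
  rw [Dfil_eq_genBi_coreSet] at hΦ hΨ
  induction hΦ using AddSubgroup.closure_induction with
  | zero =>
    have : (0 : L →ₗ[k] L).comp Ψ = 0 := by ext x; simp
    rw [this]; exact (Dfil k A L (m + m')).zero_mem
  | add x y hx hy px py =>
    have : (x + y).comp Ψ = x.comp Ψ + y.comp Ψ := by ext z; simp
    rw [this]; exact (Dfil k A L (m + m')).add_mem px py
  | neg x hx px =>
    have : (-x).comp Ψ = -(x.comp Ψ) := by ext z; simp
    rw [this]; exact (Dfil k A L (m + m')).neg_mem px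
  | mem Φ' hΦ' =>
    obtain ⟨a, b, φ, hφ, rfl⟩ := hΦ'
    induction hΨ using AddSubgroup.closure_induction with
    | zero =>
      have : ((lop k A L a).comp (φ.comp (lop k A L b))).comp (0 : L →ₗ[k] L) = 0 := by
        ext x; simp
      rw [this]; exact (Dfil k A L (m + m')).zero_mem
    | add x y hx hy px py =>
      have : ((lop k A L a).comp (φ.comp (lop k A L b))).comp (x + y) =
          ((lop k A L a).comp (φ.comp (lop k A L b))).comp x +
          ((lop k A L a).comp (φ.comp (lop k A L b))).comp y := by ext z; simp
      rw [this]; exact (Dfil k A L (m + m')).add_mem px py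
    | neg x hx px =>
      have : ((lop k A L a).comp (φ.comp (lop k A L b))).comp (-x) =
          -(((lop k A L a).comp (φ.comp (lop k A L b))).comp x) := by ext z; simp
      rw [this]; exact (Dfil k A L (m + m')).neg_mem px
    | mem Ψ' hΨ' =>
      obtain ⟨c, d, ψ, hψ, rfl⟩ := hΨ'
      rw [comp_split]
      refine (Dfil k A L (m + m')).add_mem ?_ ?_
      · -- main term : φ ∘ ψ sandwiched
        have hW : φ.comp ψ ∈ Dfil k A L (m + m') := by
          cases m' with
          | zero =>
            -- ψ central
            cases m with
            | zero =>
              refine coreSet_mem_Dfil (fun x => ?_)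
              have h1 := hφ x
              have h2 := hψ x
              calc (lop k A L x).comp (φ.comp ψ)
                  = ((lop k A L x).comp φ).comp ψ := by ext z; rfl
                _ = (φ.comp (lop k A L x)).comp ψ := by rw [h1]
                _ = φ.comp ((lop k A L x).comp ψ) := by ext z; rfl
                _ = φ.comp (ψ.comp (lop k A L x)) := by rw [h2]
                _ = (φ.comp ψ).comp (lop k A L x) := by ext z; rfl
            | succ K =>
              refine coreSet_mem_Dfil (fun x => ?_)
              have h2 := hψ x
              have key : (lop k A L x).comp (φ.comp ψ) - (φ.comp ψ).comp (lop k A L x)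
                  = ((lop k A L x).comp φ - φ.comp (lop k A L x)).comp ψ := by
                ext z
                simp only [LinearMap.comp_apply, LinearMap.sub_apply]
                rw [show (lop k A L x) (ψ z) = ψ ((lop k A L x) z) from
                  LinearMap.congr_fun h2 z]
              rw [key]
              have := IH' K 0 (by omega) _ _ (hφ x) (coreSet_mem_Dfil hψ)
              simpa using this
          | succ K' =>
            have : m + (K' + 1) = (m + K') + 1 := rfl
            rw [this]
            refine coreSet_mem_Dfil (fun x => ?_)
            have key : (lop k A L x).comp (φ.comp ψ) - (φ.comp ψ).comp (lop k A L x)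
                = ((lop k A L x).comp φ - φ.comp (lop k A L x)).comp ψ +
                  φ.comp ((lop k A L x).comp ψ - ψ.comp (lop k A L x)) := by
              ext z
              simp only [LinearMap.comp_apply, LinearMap.sub_apply, LinearMap.add_apply,
                map_sub]
              abel
            rw [key]
            refine (Dfil k A L (m + K')).add_mem ?_ ?_
            · cases m with
              | zero =>
                rw [hφ x]
                have : (φ.comp (lop k A L x) - φ.comp (lop k A L x)).comp ψ = 0 := by
                  ext z; simp
                rw [this]; exact (Dfil k A L (0 + K')).zero_mem
              | succ K =>
                have := IH' K (K' + 1) (by omega) _ _ (hφ x) (coreSet_mem_Dfil hψ)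
                exact Dfil_mono (by omega) this
            · have := IH' m K' (by omega) _ _ (coreSet_mem_Dfil hφ) (hψ x)
              exact this
        exact Dfil_lam hW a _
      · -- commutator term
        cases m' with
        | zero =>
          rw [hψ (b * c)]
          have : (φ.comp (ψ.comp (lop k A L (b * c)) - ψ.comp (lop k A L (b * c)))) = 0 := by
            ext z; simp
          rw [this]
          have : (lop k A L a).comp ((0 : L →ₗ[k] L).comp (lop k A L d)) = 0 := by
            ext z; simp
          rw [this]; exact (Dfil k A L (m + 0)).zero_mem
        | succ K' =>
          have hκ : (lop k A L (b * c)).comp ψ - ψ.comp (lop k A L (b * c))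
              ∈ Dfil k A L K' := hψ (b * c)
          have hφκ := IH' m K' (by omega) _ _ (coreSet_mem_Dfil hφ) hκ
          have := Dfil_lam hφκ a d
          exact Dfil_mono (by omega) this

lemma Dfil_comp {m m' : ℕ} {Φ Ψ : L →ₗ[k] L} (hΦ : Φ ∈ Dfil k A L m)
    (hΨ : Ψ ∈ Dfil k A L m') : Φ.comp Ψ ∈ Dfil k A L (m + m') :=
  Dfil_comp_aux (m + m') m m' rfl Φ Ψ hΦ hΨ

end CompAux

open TensorProduct MulOpposite in
/-- The Azumaya condition for an `R`-algebra `A`: finitely generated, projective and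
faithful as an `R`-module, `R·1` is the center of `A`, and the canonical map
`A ⊗_R A^op → End_R(A)`, `a ⊗ b^op ↦ (c ↦ a c b)`, is bijective (here recorded as the
existence of a linear equivalence realizing this map). -/
structure IsAzumayaAlg (R A : Type*) [CommRing R] [Ring A] [Algebra R A] : Prop where
  finite : Module.Finite R A
  projective : Module.Projective R A
  faithful : FaithfulSMul R A
  center_le : ∀ a : A, (∀ b : A, a * b = b * a) → ∃ r : R, algebraMap R A r = a
  bij : ∃ e : (A ⊗[R] Aᵐᵒᵖ) ≃ₗ[R] (A →ₗ[R] A),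
      ∀ (a b x : A), e (a ⊗ₜ[R] op b) x = a * x * b

section DualBasis

variable (k R A : Type*) [Field k] [CommRing R] [Algebra k R] [Ring A] [Algebra R A]
  [Algebra k A] [IsScalarTower k R A] [SMulCommClass R k A] {n : ℕ}

/-- The extension `φ̄ = Σ_i ρ_{b_i} ∘ φ ∘ f_i ∈ Hom_k(A,A)` of an operator
`φ ∈ Hom_k(R,R)`, relative to a dual basis `{b_i, f_i}` of the `R`-module `A`. -/
noncomputable def extOp (b : Fin (n + 1) → A) (f : Fin (n + 1) → (A →ₗ[R] R))
    (φ : R →ₗ[k] R) : A →ₗ[k] A :=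
  ∑ i, (LinearMap.mulRight k (b i)).comp
    (((Algebra.linearMap R A).restrictScalars k).comp (φ.comp ((f i).restrictScalars k)))

end DualBasis

section Ideals

variable (k : Type*) [Field k]

/-- `I` is a two-sided ideal of the ring of differential operators `D` (a subset of
`Hom_k(M,M)` closed under composition): `I ⊆ D`, `I` is an additive subgroup, and `I` is
closed under left and right composition with elements of `D`. -/
def IsIdealOf {M : Type*} [AddCommGroup M] [Module k M] (D I : Set (M →ₗ[k] M)) : Prop :=
  I ⊆ D ∧ (0 : M →ₗ[k] M) ∈ I ∧ (∀ a ∈ I, ∀ b ∈ I, a - b ∈ I) ∧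
    ∀ d ∈ D, ∀ φ ∈ I, d.comp φ ∈ I ∧ φ.comp d ∈ I

end Ideals

section Transfer

variable {k R A : Type*} [Field k] [CommRing R] [Algebra k R] [Ring A] [Algebra R A]
  [Algebra k A] [IsScalarTower k R A] [SMulCommClass R k A] {n : ℕ}

lemma lopA_apply (a x : A) : lop k A A a x = a * x := rfl

lemma lopR_apply (r x : R) : lop k R R r x = r * x := rfl

lemma mulRight_central (c : A) (a : A) :
    (lop k A A a).comp (LinearMap.mulRight k c) =
      (LinearMap.mulRight k c).comp (lop k A A a) := by
  ext x; simp [lopA_apply, mul_assoc]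

lemma mulRight_mem_Dfil_zero (c : A) :
    (LinearMap.mulRight k c : A →ₗ[k] A) ∈ Dfil k A A 0 :=
  mem_Dfil_zero_of_central (mulRight_central c)

/-- Any `R`-linear endomorphism of `A` is a differential operator of order `0`,
by the Azumaya property. -/
lemma rlinear_mem_Dfil_zero (hAz : IsAzumayaAlg R A) (Φ : A →ₗ[k] A)
    (hΦ : ∀ (r : R) (x : A), Φ (r • x) = r • Φ x) : Φ ∈ Dfil k A A 0 := by
  obtain ⟨e, he⟩ := hAz.bij
  have key : ∀ w : TensorProduct R A Aᵐᵒᵖ,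
      ((e w).restrictScalars k : A →ₗ[k] A) ∈ Dfil k A A 0 := by
    intro w
    induction w using TensorProduct.induction_on with
    | zero => simpa [map_zero] using (Dfil k A A 0).zero_mem
    | tmul a y =>
      have heq : ((e (a ⊗ₜ[R] y)).restrictScalars k : A →ₗ[k] A) =
          (lop k A A a).comp ((LinearMap.mulRight k (MulOpposite.unop y)).comp
            (lop k A A 1)) := by
        ext x
        have := he a (MulOpposite.unop y) x
        rw [MulOpposite.op_unop] at this
        simp [this, lopA_apply, mul_assoc]
      rw [heq]
      exact Dfil_lam (mulRight_mem_Dfil_zero (MulOpposite.unop y)) a 1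
    | add w w' hw hw' =>
      have : ((e (w + w')).restrictScalars k : A →ₗ[k] A) =
          (e w).restrictScalars k + (e w').restrictScalars k := by
        ext x; simp [map_add]
      rw [this]; exact (Dfil k A A 0).add_mem hw hw'
  set Φ' : A →ₗ[R] A :=
    { toFun := Φ, map_add' := Φ.map_add, map_smul' := fun r x => hΦ r x } with hΦ'
  have h1 : ((e (e.symm Φ')).restrictScalars k : A →ₗ[k] A) = Φ := by
    rw [e.apply_symm_apply]; ext x; rfl
  rw [← h1]; exact key _

/-- Conjugating a differential operator on `A` by `R`-linear maps `h : R → A` and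
`g : A → R` yields a differential operator on `R`, of the same order. -/
lemma proj_transfer : ∀ (m : ℕ) (Φ : A →ₗ[k] A), Φ ∈ Dfil k A A m →
    ∀ (g : A →ₗ[R] R) (h : R →ₗ[R] A),
    ((g.restrictScalars k).comp (Φ.comp (h.restrictScalars k))) ∈ Dfil k R R m := by
  intro m
  induction m with
  | zero =>
    intro Φ hΦ
    rw [Dfil_eq_genBi_coreSet] at hΦ
    induction hΦ using AddSubgroup.closure_induction with
    | zero =>
      intro g h
      simpa using (Dfil k R R 0).zero_mem
    | add x y hx hy px py =>
      intro g h
      have : (g.restrictScalars k).comp ((x + y).comp (h.restrictScalars k)) =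
          (g.restrictScalars k).comp (x.comp (h.restrictScalars k)) +
          (g.restrictScalars k).comp (y.comp (h.restrictScalars k)) := by ext z; simp
      rw [this]; exact (Dfil k R R 0).add_mem (px g h) (py g h)
    | neg x hx px =>
      intro g h
      have : (g.restrictScalars k).comp ((-x).comp (h.restrictScalars k)) =
          -((g.restrictScalars k).comp (x.comp (h.restrictScalars k))) := by ext z; simp
      rw [this]; exact (Dfil k R R 0).neg_mem (px g h)
    | mem Φ' hΦ' =>
      intro g h
      obtain ⟨a, c, φ, hφ, rfl⟩ := hΦ'
      refine mem_Dfil_zero_of_central (fun r => ?_)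
      ext z
      have hcent := fun (a : A) (x : A) => LinearMap.congr_fun (hφ a) x
      simp only [LinearMap.comp_apply, LinearMap.restrictScalars_apply, lopR_apply,
        lopA_apply] at hcent ⊢
      have e1 : h (r * z) = algebraMap R A r * h z := by
        rw [← smul_eq_mul, map_smul, Algebra.smul_def]
      have e2 : ∀ x : A, r * g x = g (algebraMap R A r * x) := by
        intro x; rw [← Algebra.smul_def, map_smul, smul_eq_mul]
      rw [e1, e2]
      congr 1
      calc algebraMap R A r * (a * φ (c * h z))
          = a * (algebraMap R A r * φ (c * h z)) := by
            rw [← mul_assoc, Algebra.commutes r a, mul_assoc]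
        _ = a * φ (algebraMap R A r * (c * h z)) := by rw [hcent]
        _ = a * φ (c * (algebraMap R A r * h z)) := by
            rw [← mul_assoc, Algebra.commutes r c, mul_assoc]
  | succ m IHm =>
    intro Φ hΦ
    rw [Dfil_eq_genBi_coreSet] at hΦ
    induction hΦ using AddSubgroup.closure_induction with
    | zero =>
      intro g h
      simpa using (Dfil k R R (m + 1)).zero_mem
    | add x y hx hy px py =>
      intro g h
      have : (g.restrictScalars k).comp ((x + y).comp (h.restrictScalars k)) =
          (g.restrictScalars k).comp (x.comp (h.restrictScalars k)) +
          (g.restrictScalars k).comp (y.comp (h.restrictScalars k)) := by ext z; simp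
      rw [this]; exact (Dfil k R R (m + 1)).add_mem (px g h) (py g h)
    | neg x hx px =>
      intro g h
      have : (g.restrictScalars k).comp ((-x).comp (h.restrictScalars k)) =
          -((g.restrictScalars k).comp (x.comp (h.restrictScalars k))) := by ext z; simp
      rw [this]; exact (Dfil k R R (m + 1)).neg_mem (px g h)
    | mem Φ' hΦ' =>
      intro g h
      obtain ⟨a, c, φ, hφ, rfl⟩ := hΦ'
      -- absorb the sandwiching multiplications into g and h
      have habs : (g.restrictScalars k).comp
          (((lop k A A a).comp (φ.comp (lop k A A c))).comp (h.restrictScalars k)) =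
          (((g.comp (LinearMap.mulLeft R a)).restrictScalars k).comp
            (φ.comp (((LinearMap.mulLeft R c).comp h).restrictScalars k))) := by
        ext z; simp [lopA_apply]
      rw [habs]
      set g' := g.comp (LinearMap.mulLeft R a)
      set h' := (LinearMap.mulLeft R c).comp h
      refine mem_Dfil_succ_of_core (fun r => ?_)
      have key : (lop k R R r).comp ((g'.restrictScalars k).comp
            (φ.comp (h'.restrictScalars k))) -
          ((g'.restrictScalars k).comp (φ.comp (h'.restrictScalars k))).comp
            (lop k R R r) =
          (g'.restrictScalars k).comp
            (((lop k A A (algebraMap R A r)).comp φ -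
              φ.comp (lop k A A (algebraMap R A r))).comp (h'.restrictScalars k)) := by
        ext z
        simp only [LinearMap.comp_apply, LinearMap.sub_apply,
          LinearMap.restrictScalars_apply, lopR_apply, lopA_apply, map_sub]
        have e1 : h' (r * z) = algebraMap R A r * h' z := by
          rw [← smul_eq_mul, map_smul, Algebra.smul_def]
        have e2 : ∀ x : A, r * g' x = g' (algebraMap R A r * x) := by
          intro x; rw [← Algebra.smul_def, map_smul, smul_eq_mul]
        rw [e1, e2]
      rw [key]
      exact IHm _ (hφ (algebraMap R A r)) g' h'

end Transfer
section Transfer2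

variable {k R A : Type*} [Field k] [CommRing R] [Algebra k R] [Ring A] [Algebra R A]
  [Algebra k A] [IsScalarTower k R A] [SMulCommClass R k A] {n : ℕ}

lemma Dfil_comp_le {L : Type*} [AddCommGroup L] [Module k L] [Module A L]
    [SMulCommClass A k L] {m m' M : ℕ} {Φ Ψ : L →ₗ[k] L} (hΦ : Φ ∈ Dfil k A L m)
    (hΨ : Ψ ∈ Dfil k A L m') (h : m + m' ≤ M) : Φ.comp Ψ ∈ Dfil k A L M :=
  Dfil_mono h (Dfil_comp hΦ hΨ)

lemma extOp_apply (b : Fin (n + 1) → A) (f : Fin (n + 1) → (A →ₗ[R] R))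
    (ψ : R →ₗ[k] R) (x : A) :
    extOp k R A b f ψ x = ∑ i, ψ (f i x) • b i := by
  simp [extOp, LinearMap.sum_apply, Algebra.smul_def]

lemma gdecomp {b : Fin (n + 1) → A} {f : Fin (n + 1) → (A →ₗ[R] R)}
    (hdb : ∀ a : A, ∑ i, f i a • b i = a) (g : A →ₗ[R] R) (x : A) :
    g x = ∑ i, f i x * g (b i) := by
  conv_lhs => rw [← hdb x]
  rw [map_sum]
  simp [smul_eq_mul]

lemma rlinear_sandwich_mem (hAz : IsAzumayaAlg R A) (g : A →ₗ[R] R) (h : R →ₗ[R] A) :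
    ((h.restrictScalars k).comp (g.restrictScalars k) : A →ₗ[k] A) ∈ Dfil k A A 0 :=
  rlinear_mem_Dfil_zero hAz _ (fun r x => by
    rw [LinearMap.comp_apply, LinearMap.comp_apply, LinearMap.restrictScalars_apply,
      LinearMap.restrictScalars_apply, map_smul, map_smul]; rfl)

/-- Conjugating a differential operator on `R` by `R`-linear maps `g : A → R` and
`h : R → A` yields a differential operator on `A`, of the same order. -/
lemma ext_transfer (hAz : IsAzumayaAlg R A) (b : Fin (n + 1) → A)
    (f : Fin (n + 1) → (A →ₗ[R] R))
    (hdb : ∀ a : A, ∑ i, f i a • b i = a) (hb0 : b 0 = 1)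
    (hf0 : ∀ r : R, f 0 (algebraMap R A r) = r)
    (hfi : ∀ i, i ≠ 0 → ∀ r : R, f i (algebraMap R A r) = 0) :
    ∀ (m : ℕ) (ψ : R →ₗ[k] R), ψ ∈ Dfil k R R m →
    ∀ (g : A →ₗ[R] R) (h : R →ₗ[R] A),
    ((h.restrictScalars k).comp (ψ.comp (g.restrictScalars k))) ∈ Dfil k A A m := by
  have coreStep : ∀ m : ℕ,
      (∀ (ψ : R →ₗ[k] R), ψ ∈ Dfil k R R m → ∀ (g : A →ₗ[R] R) (h : R →ₗ[R] A),
        ((h.restrictScalars k).comp (ψ.comp (g.restrictScalars k))) ∈ Dfil k A A m) →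
      ∀ (t : R →ₗ[k] R), t ∈ coreSet k R R (m + 1) →
      ∀ (g : A →ₗ[R] R) (h : R →ₗ[R] A),
      ((h.restrictScalars k).comp (t.comp (g.restrictScalars k))) ∈ Dfil k A A (m + 1) := by
    intro K IH t ht g h
    -- Step A : the extension of t is a core element of level K+1
    have hE : extOp k R A b f t ∈ Dfil k A A (K + 1) := by
      refine mem_Dfil_succ_of_core (fun a => ?_)
      have comm_eq : (lop k A A a).comp (extOp k R A b f t) -
          (extOp k R A b f t).comp (lop k A A a) =
          ∑ i, ∑ j, (LinearMap.mulRight k (b j)).comp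
            (((Algebra.linearMap R A).restrictScalars k).comp
              ((((lop k R R (f j (a * b i))).comp t) -
                t.comp (lop k R R (f j (a * b i)))).comp ((f i).restrictScalars k))) := by
        ext x
        simp only [LinearMap.sub_apply, LinearMap.comp_apply, LinearMap.sum_apply,
          LinearMap.restrictScalars_apply, Algebra.linearMap_apply,
          LinearMap.mulRight_apply, lopA_apply, lopR_apply, map_sub, extOp_apply,
          sub_mul, ← Algebra.smul_def]
        simp only [Finset.sum_sub_distrib]
        congr 1
        · -- a * ∑ t(f i x) • b i = ∑ i ∑ j (f j (a b i) * t (f i x)) • b j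
          rw [Finset.mul_sum]
          refine Finset.sum_congr rfl (fun i _ => ?_)
          rw [mul_smul_comm]
          conv_lhs => rw [← hdb (a * b i)]
          rw [Finset.smul_sum]
          refine Finset.sum_congr rfl (fun j _ => ?_)
          rw [smul_smul, mul_comm (t (f i x))]
        · -- ∑ t (f i (a x)) • b i = ∑ i ∑ j t (f j (a b i) * f i x) • b j
          rw [Finset.sum_comm]
          refine Finset.sum_congr rfl (fun j _ => ?_)
          have hax : f j (a * x) = ∑ i, f j (a * b i) * f i x := by
            have : a * x = ∑ i, f i x • (a * b i) := by
              conv_lhs => rw [← hdb x]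
              rw [Finset.mul_sum]
              exact Finset.sum_congr rfl (fun i _ => (mul_smul_comm _ _ _))
            rw [this, map_sum]
            exact Finset.sum_congr rfl (fun i _ => by rw [map_smul, smul_eq_mul, mul_comm])
          rw [hax, map_sum, Finset.sum_smul]
      rw [comm_eq]
      refine AddSubgroup.sum_mem _ (fun i _ => AddSubgroup.sum_mem _ (fun j _ => ?_))
      have hinner := IH _ (ht (f j (a * b i))) (f i) (Algebra.linearMap R A)
      exact Dfil_comp_le (mulRight_mem_Dfil_zero (b j)) hinner (by omega)
    -- Step B : ι ∘ t ∘ f_l is in Dfil (K+1)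
    have hT : ∀ l : Fin (n + 1),
        (((Algebra.linearMap R A).restrictScalars k).comp
          (t.comp ((f l).restrictScalars k)) : A →ₗ[k] A) ∈ Dfil k A A (K + 1) := by
      intro l
      have hid : (((Algebra.linearMap R A).restrictScalars k).comp
          (t.comp ((f l).restrictScalars k)) : A →ₗ[k] A) =
          ((((Algebra.linearMap R A).restrictScalars k).comp
            ((f 0).restrictScalars k)).comp
          ((extOp k R A b f t).comp
            (((Algebra.linearMap R A).restrictScalars k).comp
              ((f l).restrictScalars k)))) := by
        ext x
        simp only [LinearMap.comp_apply, LinearMap.restrictScalars_apply,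
          Algebra.linearMap_apply, extOp_apply]
        have hsum : ∑ i, t (f i (algebraMap R A (f l x))) • b i =
            algebraMap R A (t (f l x)) := by
          rw [Finset.sum_eq_single 0]
          · rw [hf0, hb0, Algebra.algebraMap_eq_smul_one]
          · intro i _ hi
            rw [hfi i hi, map_zero, zero_smul]
          · intro habs; exact absurd (Finset.mem_univ 0) habs
        rw [hsum, hf0]
      rw [hid]
      exact Dfil_comp_le (rlinear_sandwich_mem hAz (f 0) (Algebra.linearMap R A))
        (Dfil_comp_le (M := K + 1) hE
          (rlinear_sandwich_mem hAz (f l) (Algebra.linearMap R A)) (by omega)) (by omega)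
    -- Step C : decompose h ∘ t ∘ g
    have hdec : (h.restrictScalars k).comp (t.comp (g.restrictScalars k)) =
        ∑ j, ( ((LinearMap.mulRight k (h 1)).comp
                (lop k A A (algebraMap R A (g (b j))))).comp
              (((Algebra.linearMap R A).restrictScalars k).comp
                (t.comp ((f j).restrictScalars k)))
          - (LinearMap.mulRight k (h 1)).comp
              (((Algebra.linearMap R A).restrictScalars k).comp
                ((((lop k R R (g (b j))).comp t) -
                  t.comp (lop k R R (g (b j)))).comp ((f j).restrictScalars k))) ) := by
      ext x
      simp only [LinearMap.sub_apply, LinearMap.comp_apply, LinearMap.sum_apply,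
        LinearMap.restrictScalars_apply, Algebra.linearMap_apply,
        LinearMap.mulRight_apply, lopA_apply, lopR_apply, map_sub, sub_mul,
        ← Algebra.smul_def]
      have hh : ∀ r : R, h r = r • h 1 := by
        intro r
        rw [show h r = h (r • (1 : R)) by rw [smul_eq_mul, mul_one], map_smul]
      rw [hh]
      have hgx : t (g x) = ∑ j, t (g (b j) * f j x) := by
        rw [gdecomp hdb g x, map_sum]
        exact Finset.sum_congr rfl (fun j _ => by rw [mul_comm])
      rw [hgx, Finset.sum_smul]
      refine Finset.sum_congr rfl (fun j _ => ?_)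
      have : (g (b j) • algebraMap R A (t (f j x))) = algebraMap R A (g (b j) * t (f j x)) := by
        rw [map_mul, Algebra.smul_def]
      rw [this, ← Algebra.smul_def]
      abel
    rw [hdec]
    refine AddSubgroup.sum_mem _ (fun j _ => ?_)
    refine (Dfil k A A (K + 1)).sub_mem ?_ ?_
    · refine Dfil_comp_le (Dfil_comp_le (M := 0) (mulRight_mem_Dfil_zero (h 1))
        (lop_mem_Dfil_zero _) (by omega)) (hT j) (by omega)
    · have hinner := IH _ (ht (g (b j))) (f j) (Algebra.linearMap R A)
      exact Dfil_comp_le (mulRight_mem_Dfil_zero (h 1)) hinner (by omega)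
  intro m
  induction m with
  | zero =>
    intro ψ hψ
    rw [Dfil_eq_genBi_coreSet] at hψ
    induction hψ using AddSubgroup.closure_induction with
    | zero =>
      intro g h
      simpa using (Dfil k A A 0).zero_mem
    | add x y hx hy px py =>
      intro g h
      have : (h.restrictScalars k).comp ((x + y).comp (g.restrictScalars k)) =
          (h.restrictScalars k).comp (x.comp (g.restrictScalars k)) +
          (h.restrictScalars k).comp (y.comp (g.restrictScalars k)) := by ext z; simp
      rw [this]; exact (Dfil k A A 0).add_mem (px g h) (py g h)
    | neg x hx px =>
      intro g h
      have : (h.restrictScalars k).comp ((-x).comp (g.restrictScalars k)) =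
          -((h.restrictScalars k).comp (x.comp (g.restrictScalars k))) := by ext z; simp
      rw [this]; exact (Dfil k A A 0).neg_mem (px g h)
    | mem ψ' hψ' =>
      intro g h
      obtain ⟨r, s, t, htc, rfl⟩ := hψ'
      have habs : (h.restrictScalars k).comp
          (((lop k R R r).comp (t.comp (lop k R R s))).comp (g.restrictScalars k)) =
          (((h.comp (LinearMap.mulLeft R r)).restrictScalars k).comp
            (t.comp (((LinearMap.mulLeft R s).comp g).restrictScalars k))) := by
        ext z; simp [lopR_apply]
      rw [habs]
      refine rlinear_mem_Dfil_zero hAz _ (fun r' x => ?_)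
      have hcent := fun (c : R) (y : R) => LinearMap.congr_fun (htc c) y
      simp only [LinearMap.comp_apply, lopR_apply] at hcent
      simp only [LinearMap.comp_apply, LinearMap.restrictScalars_apply, map_smul]
      rw [smul_eq_mul, ← hcent r']
      have e4 : (LinearMap.mulLeft R r) (r' * t ((LinearMap.mulLeft R s) (g x))) =
          r' • ((LinearMap.mulLeft R r) (t ((LinearMap.mulLeft R s) (g x)))) := by
        simp only [LinearMap.mulLeft_apply, smul_eq_mul]; ring
      rw [e4, map_smul]
  | succ K IHK =>
    intro ψ hψ
    rw [Dfil_eq_genBi_coreSet] at hψ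
    induction hψ using AddSubgroup.closure_induction with
    | zero =>
      intro g h
      simpa using (Dfil k A A (K + 1)).zero_mem
    | add x y hx hy px py =>
      intro g h
      have : (h.restrictScalars k).comp ((x + y).comp (g.restrictScalars k)) =
          (h.restrictScalars k).comp (x.comp (g.restrictScalars k)) +
          (h.restrictScalars k).comp (y.comp (g.restrictScalars k)) := by ext z; simp
      rw [this]; exact (Dfil k A A (K + 1)).add_mem (px g h) (py g h)
    | neg x hx px =>
      intro g h
      have : (h.restrictScalars k).comp ((-x).comp (g.restrictScalars k)) =
          -((h.restrictScalars k).comp (x.comp (g.restrictScalars k))) := by ext z; simp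
      rw [this]; exact (Dfil k A A (K + 1)).neg_mem (px g h)
    | mem ψ' hψ' =>
      intro g h
      obtain ⟨r, s, t, htc, rfl⟩ := hψ'
      have habs : (h.restrictScalars k).comp
          (((lop k R R r).comp (t.comp (lop k R R s))).comp (g.restrictScalars k)) =
          (((h.comp (LinearMap.mulLeft R r)).restrictScalars k).comp
            (t.comp (((LinearMap.mulLeft R s).comp g).restrictScalars k))) := by
        ext z; simp [lopR_apply]
      rw [habs]
      exact coreStep K IHK t htc _ _

end Transfer2
section DdiffAux

variable {k : Type*} [Field k]
variable {A : Type*} [Ring A] [Algebra k A]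
variable {L : Type*} [AddCommGroup L] [Module k L] [Module A L] [SMulCommClass A k L]

lemma mem_Ddiff_iff {Φ : L →ₗ[k] L} :
    Φ ∈ Ddiff k A L ↔ ∃ m, Φ ∈ Dfil k A L m := by
  simp [Ddiff, Set.mem_iUnion, SetLike.mem_coe]

lemma mem_Ddiff_of {m : ℕ} {Φ : L →ₗ[k] L} (h : Φ ∈ Dfil k A L m) :
    Φ ∈ Ddiff k A L := mem_Ddiff_iff.mpr ⟨m, h⟩

lemma zero_mem_Ddiff : (0 : L →ₗ[k] L) ∈ Ddiff k A L :=
  mem_Ddiff_of (Dfil k A L 0).zero_mem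

lemma id_mem_Ddiff : (LinearMap.id : L →ₗ[k] L) ∈ Ddiff k A L :=
  mem_Ddiff_of id_mem_Dfil_zero

lemma Ddiff_comp {Φ Ψ : L →ₗ[k] L} (hΦ : Φ ∈ Ddiff k A L) (hΨ : Ψ ∈ Ddiff k A L) :
    Φ.comp Ψ ∈ Ddiff k A L := by
  obtain ⟨m, hm⟩ := mem_Ddiff_iff.mp hΦ
  obtain ⟨m', hm'⟩ := mem_Ddiff_iff.mp hΨ
  exact mem_Ddiff_of (Dfil_comp hm hm')

lemma Ddiff_sub {Φ Ψ : L →ₗ[k] L} (hΦ : Φ ∈ Ddiff k A L) (hΨ : Ψ ∈ Ddiff k A L) :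
    Φ - Ψ ∈ Ddiff k A L := by
  obtain ⟨m, hm⟩ := mem_Ddiff_iff.mp hΦ
  obtain ⟨m', hm'⟩ := mem_Ddiff_iff.mp hΨ
  exact mem_Ddiff_of ((Dfil k A L (max m m')).sub_mem
    (Dfil_mono (le_max_left m m') hm) (Dfil_mono (le_max_right m m') hm'))

end DdiffAux

section TransferTop

variable {k R A : Type*} [Field k] [CommRing R] [Algebra k R] [Ring A] [Algebra R A]
  [Algebra k A] [IsScalarTower k R A] [SMulCommClass R k A] {n : ℕ}

/-- The extension of a differential operator on `R` is a differential operator on `A`. -/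
lemma extOp_mem_Dfil (hAz : IsAzumayaAlg R A) {b : Fin (n + 1) → A}
    {f : Fin (n + 1) → (A →ₗ[R] R)}
    (hdb : ∀ a : A, ∑ i, f i a • b i = a) (hb0 : b 0 = 1)
    (hf0 : ∀ r : R, f 0 (algebraMap R A r) = r)
    (hfi : ∀ i, i ≠ 0 → ∀ r : R, f i (algebraMap R A r) = 0)
    {m : ℕ} {ψ : R →ₗ[k] R} (hψ : ψ ∈ Dfil k R R m) :
    extOp k R A b f ψ ∈ Dfil k A A m := by
  rw [extOp]
  refine AddSubgroup.sum_mem _ (fun i _ => ?_)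
  exact Dfil_comp_le (mulRight_mem_Dfil_zero (b i))
    (ext_transfer hAz b f hdb hb0 hf0 hfi m ψ hψ (f i) (Algebra.linearMap R A))
    (by omega)

variable (b : Fin (n + 1) → A) (f : Fin (n + 1) → (A →ₗ[R] R))

/-- `extOp ψ` restricted to the image of `R` acts as `ψ`. -/
lemma extOp_iota (hb0 : b 0 = 1)
    (hf0 : ∀ r : R, f 0 (algebraMap R A r) = r)
    (hfi : ∀ i, i ≠ 0 → ∀ r : R, f i (algebraMap R A r) = 0)
    (ψ : R →ₗ[k] R) (r : R) :
    extOp k R A b f ψ (algebraMap R A r) = algebraMap R A (ψ r) := by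
  rw [extOp_apply, Finset.sum_eq_single 0]
  · rw [hf0, hb0, Algebra.algebraMap_eq_smul_one]
  · intro i _ hi; rw [hfi i hi, map_zero, zero_smul]
  · intro habs; exact absurd (Finset.mem_univ 0) habs

end TransferTop
section DdiffAux2

variable {k : Type*} [Field k]
variable {A : Type*} [Ring A] [Algebra k A]
variable {L : Type*} [AddCommGroup L] [Module k L] [Module A L] [SMulCommClass A k L]

lemma Ddiff_neg {Φ : L →ₗ[k] L} (hΦ : Φ ∈ Ddiff k A L) : -Φ ∈ Ddiff k A L := by
  have := Ddiff_sub (zero_mem_Ddiff (k := k) (A := A) (L := L)) hΦ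
  simpa using this

lemma Ddiff_add {Φ Ψ : L →ₗ[k] L} (hΦ : Φ ∈ Ddiff k A L) (hΨ : Ψ ∈ Ddiff k A L) :
    Φ + Ψ ∈ Ddiff k A L := by
  have := Ddiff_sub hΦ (Ddiff_neg hΨ)
  simpa [sub_neg_eq_add] using this

end DdiffAux2

section Identities

variable {k R A : Type*} [Field k] [CommRing R] [Algebra k R] [Ring A] [Algebra R A]
  [Algebra k A] [IsScalarTower k R A] [SMulCommClass R k A] {n : ℕ}
variable (b : Fin (n + 1) → A) (f : Fin (n + 1) → (A →ₗ[R] R))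

/-- Commuting a differential operator on `R` past `f_0` on the left. -/
lemma conj_left (hb0 : b 0 = 1) (hf0 : ∀ r : R, f 0 (algebraMap R A r) = r)
    (hfi : ∀ i, i ≠ 0 → ∀ r : R, f i (algebraMap R A r) = 0)
    (d : R →ₗ[k] R) (Φ : A →ₗ[k] A) :
    d.comp (((f 0).restrictScalars k).comp
        (Φ.comp ((Algebra.linearMap R A).restrictScalars k))) =
      ((f 0).restrictScalars k).comp
        (((extOp k R A b f d).comp
          ((((Algebra.linearMap R A).restrictScalars k).comp
            ((f 0).restrictScalars k)).comp Φ)).comp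
          ((Algebra.linearMap R A).restrictScalars k)) := by
  ext r
  simp only [LinearMap.comp_apply, LinearMap.restrictScalars_apply, Algebra.linearMap_apply]
  rw [extOp_iota b f hb0 hf0 hfi, hf0]

/-- Commuting a differential operator on `R` past `f_0` on the right. -/
lemma conj_right (hb0 : b 0 = 1) (hf0 : ∀ r : R, f 0 (algebraMap R A r) = r)
    (hfi : ∀ i, i ≠ 0 → ∀ r : R, f i (algebraMap R A r) = 0)
    (d : R →ₗ[k] R) (Φ : A →ₗ[k] A) :
    (((f 0).restrictScalars k).comp
        (Φ.comp ((Algebra.linearMap R A).restrictScalars k))).comp d =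
      ((f 0).restrictScalars k).comp
        ((Φ.comp (extOp k R A b f d)).comp
          ((Algebra.linearMap R A).restrictScalars k)) := by
  ext r
  simp only [LinearMap.comp_apply, LinearMap.restrictScalars_apply, Algebra.linearMap_apply]
  rw [extOp_iota b f hb0 hf0 hfi]

/-- `f_0 ∘ extOp ψ ∘ ι = ψ`. -/
lemma zeta_extOp (hb0 : b 0 = 1) (hf0 : ∀ r : R, f 0 (algebraMap R A r) = r)
    (hfi : ∀ i, i ≠ 0 → ∀ r : R, f i (algebraMap R A r) = 0) (ψ : R →ₗ[k] R) :
    ((f 0).restrictScalars k).comp ((extOp k R A b f ψ).comp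
      ((Algebra.linearMap R A).restrictScalars k)) = ψ := by
  ext r
  simp only [LinearMap.comp_apply, LinearMap.restrictScalars_apply, Algebra.linearMap_apply]
  rw [extOp_iota b f hb0 hf0 hfi, hf0]

/-- The extension of `f_0 ∘ Φ ∘ ι` decomposes through elements of the ideal. -/
lemma extOp_zeta_decomp (Φ : A →ₗ[k] A) :
    extOp k R A b f (((f 0).restrictScalars k).comp
        (Φ.comp ((Algebra.linearMap R A).restrictScalars k))) =
      ∑ i, (LinearMap.mulRight k (b i)).comp
        (((((Algebra.linearMap R A).restrictScalars k).comp
            ((f 0).restrictScalars k)).comp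
          (Φ.comp (((Algebra.linearMap R A).restrictScalars k).comp
            ((f i).restrictScalars k))))) := by
  rw [extOp]
  refine Finset.sum_congr rfl (fun i _ => ?_)
  ext x
  rfl

/-- Reconstruction of a differential operator on `A` from its compressions. -/
lemma reconstruct (hdb : ∀ a : A, ∑ i, f i a • b i = a) (hb0 : b 0 = 1)
    (hf0 : ∀ r : R, f 0 (algebraMap R A r) = r)
    (hfi : ∀ i, i ≠ 0 → ∀ r : R, f i (algebraMap R A r) = 0) (Φ : A →ₗ[k] A) :
    Φ = ∑ j, ∑ i,
      ((LinearMap.mulRight k (b i)).comp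
          (((Algebra.linearMap R A).restrictScalars k).comp
            ((f 0).restrictScalars k))).comp
        ((extOp k R A b f
            (((f 0).restrictScalars k).comp
              ((((((Algebra.linearMap R A).restrictScalars k).comp
                  ((f i).restrictScalars k)).comp
                  (Φ.comp (LinearMap.mulRight k (b j)))).comp
                ((Algebra.linearMap R A).restrictScalars k))))).comp
          ((((Algebra.linearMap R A).restrictScalars k).comp
              ((f 0).restrictScalars k)).comp
            ((((Algebra.linearMap R A).restrictScalars k).comp
              ((f j).restrictScalars k))))) := by
  ext x
  simp only [LinearMap.sum_apply, LinearMap.comp_apply,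
    LinearMap.restrictScalars_apply, Algebra.linearMap_apply, LinearMap.mulRight_apply]
  conv_lhs => rw [← hdb x, map_sum]
  refine Finset.sum_congr rfl (fun j _ => ?_)
  conv_lhs => rw [← hdb (Φ (f j x • b j))]
  refine Finset.sum_congr rfl (fun i _ => ?_)
  rw [hf0, extOp_iota b f hb0 hf0 hfi, hf0]
  simp only [LinearMap.comp_apply, LinearMap.restrictScalars_apply,
    Algebra.linearMap_apply, LinearMap.mulRight_apply]
  rw [hf0, ← Algebra.smul_def, ← Algebra.smul_def]

/-- Compression of a generator of `η(J)` decomposes through elements of `J`. -/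
lemma zeta_eta_decomp (hdb : ∀ a : A, ∑ i, f i a • b i = a)
    (d e : A →ₗ[k] A) (ψ : R →ₗ[k] R) :
    ((f 0).restrictScalars k).comp
        ((d.comp ((extOp k R A b f ψ).comp e)).comp
          ((Algebra.linearMap R A).restrictScalars k)) =
      ∑ l, (((f 0).restrictScalars k).comp
          ((d.comp (LinearMap.mulRight k (b l))).comp
            ((Algebra.linearMap R A).restrictScalars k))).comp
        (ψ.comp (((f l).restrictScalars k).comp
          (e.comp ((Algebra.linearMap R A).restrictScalars k)))) := by
  ext r
  simp only [LinearMap.sum_apply, LinearMap.comp_apply,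
    LinearMap.restrictScalars_apply, Algebra.linearMap_apply, LinearMap.mulRight_apply]
  rw [extOp_apply, map_sum, map_sum]
  refine Finset.sum_congr rfl (fun l _ => ?_)
  rw [Algebra.smul_def]

end Identities
section Stmt12

variable (k R A : Type*) [Field k] [CommRing R] [Algebra k R] [Ring A] [Algebra R A]
  [Algebra k A] [IsScalarTower k R A] [SMulCommClass R k A] {n : ℕ}

/-- `ζ(I) = f_0 · I · f_0`, viewed as a set of operators on `R`. -/
def zetaMap (f : Fin (n + 1) → (A →ₗ[R] R)) (I : Set (A →ₗ[k] A)) : Set (R →ₗ[k] R) :=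
  {ψ | ∃ Φ ∈ I, ψ = ((f 0).restrictScalars k).comp
    (Φ.comp ((Algebra.linearMap R A).restrictScalars k))}

/-- `η(J) = D_k(A) · J̄ · D_k(A)`, the additive subgroup generated by operators
`d ∘ ψ̄ ∘ e` with `d, e ∈ D_k(A)` and `ψ ∈ J`. -/
noncomputable def etaMap (b : Fin (n + 1) → A) (f : Fin (n + 1) → (A →ₗ[R] R))
    (J : Set (R →ₗ[k] R)) : AddSubgroup (A →ₗ[k] A) :=
  AddSubgroup.closure {Φ | ∃ d ∈ Ddiff k A A, ∃ e ∈ Ddiff k A A, ∃ ψ ∈ J,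
    Φ = d.comp ((extOp k R A b f ψ).comp e)}

/-- For an Azumaya algebra `A` over a commutative Noetherian `k`-algebra `R`, the map
`I ↦ f_0·I·f_0` is a bijection from two-sided ideals of `D_k(A)` to two-sided ideals of
`D_k(R)`, with inverse `J ↦ D_k(A)·J̄·D_k(A)`. -/
theorem ideal_correspondence [IsNoetherianRing R] (hAz : IsAzumayaAlg R A)
    (b : Fin (n + 1) → A) (f : Fin (n + 1) → (A →ₗ[R] R))
    (hdb : ∀ a : A, ∑ i, f i a • b i = a) (hb0 : b 0 = 1)
    (hf0 : ∀ r : R, f 0 (algebraMap R A r) = r)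
    (hfi : ∀ i, i ≠ 0 → ∀ r : R, f i (algebraMap R A r) = 0) :
    (∀ I : Set (A →ₗ[k] A), IsIdealOf k (Ddiff k A A) I →
      IsIdealOf k (Ddiff k R R) (zetaMap k R A f I) ∧
      (etaMap k R A b f (zetaMap k R A f I) : Set (A →ₗ[k] A)) = I) ∧
    (∀ J : Set (R →ₗ[k] R), IsIdealOf k (Ddiff k R R) J →
      IsIdealOf k (Ddiff k A A) (etaMap k R A b f J : Set (A →ₗ[k] A)) ∧
      zetaMap k R A f (etaMap k R A b f J : Set (A →ₗ[k] A)) = J) := by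
  classical
  -- membership facts
  have hπ : ∀ l : Fin (n + 1),
      ((((Algebra.linearMap R A).restrictScalars k).comp
        ((f l).restrictScalars k)) : A →ₗ[k] A) ∈ Dfil k A A 0 :=
    fun l => rlinear_sandwich_mem hAz (f l) (Algebra.linearMap R A)
  have hπD : ∀ l : Fin (n + 1),
      ((((Algebra.linearMap R A).restrictScalars k).comp
        ((f l).restrictScalars k)) : A →ₗ[k] A) ∈ Ddiff k A A :=
    fun l => mem_Ddiff_of (hπ l)
  have hρD : ∀ c : A, (LinearMap.mulRight k c : A →ₗ[k] A) ∈ Ddiff k A A :=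
    fun c => mem_Ddiff_of (mulRight_mem_Dfil_zero c)
  have hextD : ∀ ψ : R →ₗ[k] R, ψ ∈ Ddiff k R R → extOp k R A b f ψ ∈ Ddiff k A A := by
    intro ψ hψ
    obtain ⟨m, hm⟩ := mem_Ddiff_iff.mp hψ
    exact mem_Ddiff_of (extOp_mem_Dfil hAz hdb hb0 hf0 hfi hm)
  have hidA : (LinearMap.id : A →ₗ[k] A) ∈ Ddiff k A A := id_mem_Ddiff
  constructor
  · -- Part 1 : ideals of D_k(A)
    intro I hI
    obtain ⟨hIsub, hI0, hIsubm, hIcomp⟩ := hI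
    have hIadd : ∀ x ∈ I, ∀ y ∈ I, x + y ∈ I := by
      intro x hx y hy
      have h1 : (0 : A →ₗ[k] A) - y ∈ I := hIsubm 0 hI0 y hy
      have h2 := hIsubm x hx _ h1
      have : x - (0 - y) = x + y := by abel
      rwa [this] at h2
    have hIsum : ∀ (s : Finset (Fin (n + 1))) (G : Fin (n + 1) → (A →ₗ[k] A)),
        (∀ i ∈ s, G i ∈ I) → (∑ i ∈ s, G i) ∈ I := by
      intro s G hG
      classical
      exact Finset.sum_induction G (· ∈ I) (fun x y hx hy => hIadd x hx y hy) hI0 hG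
    constructor
    · -- ζ(I) is an ideal of D_k(R)
      refine ⟨?_, ?_, ?_, ?_⟩
      · rintro ψ ⟨Φ, hΦ, rfl⟩
        obtain ⟨m, hm⟩ := mem_Ddiff_iff.mp (hIsub hΦ)
        exact mem_Ddiff_of (proj_transfer m Φ hm (f 0) (Algebra.linearMap R A))
      · exact ⟨0, hI0, by ext r; simp⟩
      · rintro ψ₁ ⟨Φ₁, h1, rfl⟩ ψ₂ ⟨Φ₂, h2, rfl⟩
        exact ⟨Φ₁ - Φ₂, hIsubm _ h1 _ h2, by ext r; simp⟩
      · rintro d hd ψ ⟨Φ, hΦ, rfl⟩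
        have hde : extOp k R A b f d ∈ Ddiff k A A := by
          exact hextD d hd
        constructor
        · refine ⟨(extOp k R A b f d).comp
            (((((Algebra.linearMap R A).restrictScalars k).comp
              ((f 0).restrictScalars k))).comp Φ), ?_, ?_⟩
          · exact (hIcomp _ hde _ ((hIcomp _ (hπD 0) _ hΦ).1)).1
          · exact conj_left b f hb0 hf0 hfi d Φ
        · refine ⟨Φ.comp (extOp k R A b f d), (hIcomp _ hde _ hΦ).2, ?_⟩
          exact conj_right b f hb0 hf0 hfi d Φ
    · -- η(ζ(I)) = I
      apply Set.Subset.antisymm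
      · intro Φ hΦ
        rw [SetLike.mem_coe] at hΦ
        induction hΦ using AddSubgroup.closure_induction with
        | mem x hx =>
          obtain ⟨d, hd, e, he, ψ, hψ, rfl⟩ := hx
          obtain ⟨Φ0, hΦ0, rfl⟩ := hψ
          have hext : extOp k R A b f
              (((f 0).restrictScalars k).comp
                (Φ0.comp ((Algebra.linearMap R A).restrictScalars k))) ∈ I := by
            rw [extOp_zeta_decomp]
            refine hIsum _ _ (fun i _ => ?_)
            exact (hIcomp _ (hρD (b i)) _
              ((hIcomp _ (hπD 0) _ ((hIcomp _ (hπD i) _ hΦ0).2)).1)).1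
          exact (hIcomp _ hd _ ((hIcomp _ he _ hext).2)).1
        | zero => exact hI0
        | add x y hx hy px py => exact hIadd x px y py
        | neg x hx px =>
          have h1 := hIsubm 0 hI0 x px
          have : (0 : A →ₗ[k] A) - x = -x := by abel
          rwa [this] at h1
      · intro Φ hΦ
        rw [SetLike.mem_coe]
        rw [reconstruct b f hdb hb0 hf0 hfi Φ]
        refine AddSubgroup.sum_mem _ (fun j _ => AddSubgroup.sum_mem _ (fun i _ => ?_))
        refine AddSubgroup.subset_closure ?_
        refine ⟨(LinearMap.mulRight k (b i)).comp
            (((Algebra.linearMap R A).restrictScalars k).comp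
              ((f 0).restrictScalars k)), ?_, ?_⟩
        · exact Ddiff_comp (hρD (b i)) (hπD 0)
        refine ⟨(((Algebra.linearMap R A).restrictScalars k).comp
              ((f 0).restrictScalars k)).comp
            ((((Algebra.linearMap R A).restrictScalars k).comp
              ((f j).restrictScalars k))), ?_, ?_⟩
        · exact Ddiff_comp (hπD 0) (hπD j)
        refine ⟨((f 0).restrictScalars k).comp
            ((((((Algebra.linearMap R A).restrictScalars k).comp
                ((f i).restrictScalars k)).comp
                (Φ.comp (LinearMap.mulRight k (b j)))).comp
              ((Algebra.linearMap R A).restrictScalars k))), ?_, rfl⟩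
        refine ⟨((((Algebra.linearMap R A).restrictScalars k).comp
            ((f i).restrictScalars k)).comp
            (Φ.comp (LinearMap.mulRight k (b j)))), ?_, rfl⟩
        exact (hIcomp _ (hπD i) _ ((hIcomp _ (hρD (b j)) _ hΦ).2)).1
  · -- Part 2 : ideals of D_k(R)
    intro J hJ
    obtain ⟨hJsub, hJ0, hJsubm, hJcomp⟩ := hJ
    have hJadd : ∀ x ∈ J, ∀ y ∈ J, x + y ∈ J := by
      intro x hx y hy
      have h1 : (0 : R →ₗ[k] R) - y ∈ J := hJsubm 0 hJ0 y hy
      have h2 := hJsubm x hx _ h1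
      have : x - (0 - y) = x + y := by abel
      rwa [this] at h2
    have hJsum : ∀ (s : Finset (Fin (n + 1))) (G : Fin (n + 1) → (R →ₗ[k] R)),
        (∀ i ∈ s, G i ∈ J) → (∑ i ∈ s, G i) ∈ J := by
      intro s G hG
      exact Finset.sum_induction G (· ∈ J) (fun x y hx hy => hJadd x hx y hy) hJ0 hG
    constructor
    · -- η(J) is an ideal of D_k(A)
      refine ⟨?_, ?_, ?_, ?_⟩
      · intro Φ hΦ
        rw [SetLike.mem_coe] at hΦ
        induction hΦ using AddSubgroup.closure_induction with
        | mem x hx =>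
          obtain ⟨d, hd, e, he, ψ, hψ, rfl⟩ := hx
          exact Ddiff_comp hd (Ddiff_comp (hextD ψ (hJsub hψ)) he)
        | zero => exact zero_mem_Ddiff
        | add x y hx hy px py => exact Ddiff_add px py
        | neg x hx px => exact Ddiff_neg px
      · exact (etaMap k R A b f J).zero_mem
      · intro x hx y hy
        rw [SetLike.mem_coe] at hx hy ⊢
        exact (etaMap k R A b f J).sub_mem hx hy
      · intro d hd Φ hΦ
        rw [SetLike.mem_coe] at hΦ
        have key : d.comp Φ ∈ etaMap k R A b f J ∧ Φ.comp d ∈ etaMap k R A b f J := by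
          induction hΦ using AddSubgroup.closure_induction with
          | mem x hx =>
            obtain ⟨d', hd', e, he, ψ, hψ, rfl⟩ := hx
            constructor
            · refine AddSubgroup.subset_closure
                ⟨d.comp d', Ddiff_comp hd hd', e, he, ψ, hψ, ?_⟩
              ext z; rfl
            · refine AddSubgroup.subset_closure
                ⟨d', hd', e.comp d, Ddiff_comp he hd, ψ, hψ, ?_⟩
              ext z; rfl
          | zero =>
            constructor
            · have : d.comp (0 : A →ₗ[k] A) = 0 := by ext z; simp
              rw [this]; exact (etaMap k R A b f J).zero_mem
            · have : (0 : A →ₗ[k] A).comp d = 0 := by ext z; simp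
              rw [this]; exact (etaMap k R A b f J).zero_mem
          | add x y hx hy px py =>
            constructor
            · have : d.comp (x + y) = d.comp x + d.comp y := by ext z; simp
              rw [this]; exact (etaMap k R A b f J).add_mem px.1 py.1
            · have : (x + y).comp d = x.comp d + y.comp d := by ext z; simp
              rw [this]; exact (etaMap k R A b f J).add_mem px.2 py.2
          | neg x hx px =>
            constructor
            · have : d.comp (-x) = -(d.comp x) := by ext z; simp
              rw [this]; exact (etaMap k R A b f J).neg_mem px.1
            · have : (-x).comp d = -(x.comp d) := by ext z; simp
              rw [this]; exact (etaMap k R A b f J).neg_mem px.2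
        exact ⟨SetLike.mem_coe.mpr key.1, SetLike.mem_coe.mpr key.2⟩
    · -- ζ(η(J)) = J
      apply Set.Subset.antisymm
      · rintro ψ ⟨Φ, hΦ, rfl⟩
        rw [SetLike.mem_coe] at hΦ
        induction hΦ using AddSubgroup.closure_induction with
        | mem x hx =>
          obtain ⟨d, hd, e, he, ψ0, hψ0, rfl⟩ := hx
          rw [zeta_eta_decomp b f hdb d e ψ0]
          refine hJsum _ _ (fun l _ => ?_)
          have hα : (((f 0).restrictScalars k).comp
              ((d.comp (LinearMap.mulRight k (b l))).comp
                ((Algebra.linearMap R A).restrictScalars k))) ∈ Ddiff k R R := by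
            obtain ⟨m, hm⟩ := mem_Ddiff_iff.mp hd
            exact mem_Ddiff_of (proj_transfer _ _
              (Dfil_comp_le (M := m) hm (mulRight_mem_Dfil_zero (b l)) (by omega))
              (f 0) (Algebra.linearMap R A))
          have hβ : (((f l).restrictScalars k).comp
              (e.comp ((Algebra.linearMap R A).restrictScalars k))) ∈ Ddiff k R R := by
            obtain ⟨m, hm⟩ := mem_Ddiff_iff.mp he
            exact mem_Ddiff_of (proj_transfer _ _ hm (f l) (Algebra.linearMap R A))
          exact (hJcomp _ hα _ ((hJcomp _ hβ _ hψ0).2)).1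
        | zero =>
          have : ((f 0).restrictScalars k).comp ((0 : A →ₗ[k] A).comp
              ((Algebra.linearMap R A).restrictScalars k)) = 0 := by ext r; simp
          rw [this]; exact hJ0
        | add x y hx hy px py =>
          have : ((f 0).restrictScalars k).comp ((x + y).comp
              ((Algebra.linearMap R A).restrictScalars k)) =
            ((f 0).restrictScalars k).comp (x.comp
              ((Algebra.linearMap R A).restrictScalars k)) +
            ((f 0).restrictScalars k).comp (y.comp
              ((Algebra.linearMap R A).restrictScalars k)) := by ext r; simp
          rw [this]; exact hJadd _ px _ py
        | neg x hx px =>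
          have : ((f 0).restrictScalars k).comp ((-x).comp
              ((Algebra.linearMap R A).restrictScalars k)) =
            (0 : R →ₗ[k] R) - ((f 0).restrictScalars k).comp (x.comp
              ((Algebra.linearMap R A).restrictScalars k)) := by ext r; simp
          rw [this]; exact hJsubm 0 hJ0 _ px
      · intro ψ hψ
        refine ⟨extOp k R A b f ψ, ?_, (zeta_extOp b f hb0 hf0 hfi ψ).symm⟩
        rw [SetLike.mem_coe]
        refine AddSubgroup.subset_closure
          ⟨LinearMap.id, hidA, LinearMap.id, hidA, ψ, hψ, ?_⟩
        ext z; rfl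

end Stmt12
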